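/- arXiv:1510.09126 — 3 statements merged into one kernel-verified Lean document; each statement's English description precedes it below -/
import Mathlib

section
/- Let n ≥ 1 and let f₁,…,fₙ and g₁,…,gₙ be holomorphic functions on the open unit disk D ⊆ ℂ. Assume that g₁(0) = 0, that g₁(t) ≠ 0 for every t ∈ D with t ≠ 0, and that f₁(t)·g₁′(t)/g₁(t) + Σ_{i=2}^{n} fᵢ(t)·gᵢ′(t) = 0 for every t ∈ D with t ≠ 0. Then f₁(0) = 0. -/
/-!
If `g₁` vanishes to order `k ≥ 1` at `0`, then `t · g₁'(t) / g₁(t) → k` as `t → 0`. Multiplying the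
relation by `t` and letting `t → 0` kills every term except `k · f₁(0)`, so `f₁(0) = 0`.
-/

open Metric Finset Filter Topology

section LogDeriv

variable {𝕜 : Type*} [NontriviallyNormedField 𝕜] {f g h : 𝕜 → 𝕜} {x : 𝕜}

theorem analyticOrderAt_ne_top_of_eventually_ne_zero (hf : ∀ᶠ w in 𝓝[≠] x, f w ≠ 0) :
    analyticOrderAt f x ≠ ⊤ := by
  rw [Ne, analyticOrderAt_eq_top]
  intro h
  exact (hf.and (nhdsWithin_le_nhds h)).exists.elim fun w hw ↦ hw.1 hw.2

variable [CompleteSpace 𝕜]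

theorem AnalyticAt.tendsto_mul_logDeriv_of_analyticOrderAt_eq {n : ℕ} (hf : AnalyticAt 𝕜 f x)
    (hn : analyticOrderAt f x = n) :
    Tendsto (fun w ↦ (w - x) * logDeriv f w) (𝓝[≠] x) (𝓝 n) := by
  obtain ⟨u, hu, hux, hfu⟩ := hf.analyticOrderAt_eq_natCast.mp hn
  have hlog : ∀ᶠ w in 𝓝[≠] x, (w - x) * logDeriv f w = n + (w - x) * logDeriv u w := by
    filter_upwards [nhdsWithin_le_nhds hfu.eventually_nhds,
      nhdsWithin_le_nhds hu.eventually_analyticAt,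
      nhdsWithin_le_nhds (hu.continuousAt.eventually_ne hux), self_mem_nhdsWithin]
      with w hfw huw huw0 hw
    have hwx : w - x ≠ 0 := sub_ne_zero.mpr hw
    simp only [smul_eq_mul] at hfw
    rw [(logDeriv_congr_nhds hfw).eq_of_nhds,
      logDeriv_mul (f := fun z ↦ (z - x) ^ n) w (pow_ne_zero n hwx) huw0
        ((differentiableAt_id.sub_const x).pow n) huw.differentiableAt,
      logDeriv_fun_pow (f := fun z ↦ z - x) (differentiableAt_id.sub_const x), logDeriv_apply,
      deriv_sub_const, deriv_id'']
    field_simp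
  have hcont : ContinuousAt (fun w ↦ (n : 𝕜) + (w - x) * logDeriv u w) x :=
    continuousAt_const.add ((continuousAt_id.sub continuousAt_const).mul
      (hu.deriv.continuousAt.div hu.continuousAt hux))
  simpa using (hcont.tendsto.mono_left nhdsWithin_le_nhds).congr' (hlog.mono fun w hw ↦ hw.symm)

theorem eq_zero_of_eventually_mul_logDeriv_add_eq_zero [CharZero 𝕜] (hg : AnalyticAt 𝕜 g x)
    (hgx : g x = 0) (hg_ne : ∀ᶠ w in 𝓝[≠] x, g w ≠ 0) (hf : ContinuousAt f x)
    (hh : ContinuousAt h x) (heq : ∀ᶠ w in 𝓝[≠] x, f w * logDeriv g w + h w = 0) :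
    f x = 0 := by
  obtain ⟨n, hn⟩ := ENat.ne_top_iff_exists.mp (analyticOrderAt_ne_top_of_eventually_ne_zero hg_ne)
  have hn0 : n ≠ 0 := by
    rintro rfl
    exact hg.analyticOrderAt_eq_zero.mp hn.symm hgx
  have hlim : Tendsto (fun w ↦ f w * ((w - x) * logDeriv g w) + (w - x) * h w) (𝓝[≠] x)
      (𝓝 (f x * n + (x - x) * h x)) :=
    ((hf.tendsto.mono_left nhdsWithin_le_nhds).mul
        (hg.tendsto_mul_logDeriv_of_analyticOrderAt_eq hn.symm)).add
      (((continuousAt_id.sub continuousAt_const).mul hh).tendsto.mono_left nhdsWithin_le_nhds)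
  have hzero : ∀ᶠ w in 𝓝[≠] x, f w * ((w - x) * logDeriv g w) + (w - x) * h w = 0 := by
    filter_upwards [heq] with w hw
    linear_combination (w - x) * hw
  have hlim_eq := tendsto_nhds_unique hlim
    (tendsto_const_nhds.congr' (hzero.mono fun w hw ↦ hw.symm))
  simpa [hn0] using hlim_eq

end LogDeriv

/-- Key analytic step in the proof that the conormal of a natural analytic set is
Legendrian: if `f₁ g₁'/g₁ + ∑_{i≥2} fᵢ gᵢ' = 0` off the origin on the unit disk,
with all `fᵢ, gᵢ` holomorphic, `g₁(0) = 0` and `g₁ ≠ 0` off the origin,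
then `f₁(0) = 0`. -/
theorem conormal_key_step (n : ℕ) (hn : 0 < n) (f g : Fin n → ℂ → ℂ)
    (hf : ∀ i, DifferentiableOn ℂ (f i) (ball (0 : ℂ) 1))
    (hg : ∀ i, DifferentiableOn ℂ (g i) (ball (0 : ℂ) 1))
    (hg0 : g ⟨0, hn⟩ 0 = 0)
    (hgne : ∀ t ∈ ball (0 : ℂ) 1, t ≠ 0 → g ⟨0, hn⟩ t ≠ 0)
    (heq : ∀ t ∈ ball (0 : ℂ) 1, t ≠ 0 →
      f ⟨0, hn⟩ t * deriv (g ⟨0, hn⟩) t / g ⟨0, hn⟩ t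
        + ∑ i ∈ Finset.univ.erase ⟨0, hn⟩, f i t * deriv (g i) t = 0) :
    f ⟨0, hn⟩ 0 = 0 := by
  have hball : ball (0 : ℂ) 1 ∈ 𝓝 0 := ball_mem_nhds 0 one_pos
  have hfA i : AnalyticAt ℂ (f i) 0 := (hf i).analyticAt hball
  have hgA i : AnalyticAt ℂ (g i) 0 := (hg i).analyticAt hball
  have hpunct : ∀ᶠ t in 𝓝[≠] (0 : ℂ), t ∈ ball (0 : ℂ) 1 ∧ t ≠ 0 :=
    Eventually.and (mem_nhdsWithin_of_mem_nhds hball) self_mem_nhdsWithin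
  refine eq_zero_of_eventually_mul_logDeriv_add_eq_zero
    (h := fun t ↦ ∑ i ∈ univ.erase ⟨0, hn⟩, f i t * deriv (g i) t) (hgA _) hg0
    (hpunct.mono fun t ht ↦ hgne t ht.1 ht.2) (hfA _).continuousAt
    (tendsto_finsetSum _ fun i _ ↦ (hfA i).continuousAt.mul (hgA i).deriv.continuousAt) ?_
  filter_upwards [hpunct] with t ⟨ht, ht0⟩
  simpa [logDeriv_apply, mul_div_assoc] using heq t ht ht0
end

section
/- Fix integers n ≥ 1, 0 ≤ ν ≤ n and 0 ≤ μ ≤ ν, and an open set U ⊆ ℂ^{2n} with holomorphic coordinates (x₁,…,xₙ,ξ₁,…,ξₙ). Let W = {p ∈ U : x₁(p) = ⋯ = x_μ(p) = ξ₁(p) = ⋯ = ξ_μ(p) = 0}. If f is a holomorphic function on U vanishing identically on W, then for every holomorphic function g on U the logarithmic Poisson bracket {f,g} vanishes identically on W. In particular W is an involutive subset: {f,g} vanishes on W whenever both f and g do. -/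
open Finset

/-- The logarithmic Poisson bracket
`{f,g} = ∑_{i<ν} xᵢ(∂f/∂ξᵢ ∂g/∂xᵢ − ∂f/∂xᵢ ∂g/∂ξᵢ) + ∑_{i≥ν} (∂f/∂ξᵢ ∂g/∂xᵢ − ∂f/∂xᵢ ∂g/∂ξᵢ)`
on `ℂ^{2n}` with coordinates `(x, ξ)`. -/
noncomputable def logPoisson (n ν : ℕ) (f g : ((Fin n → ℂ) × (Fin n → ℂ)) → ℂ)
    (p : (Fin n → ℂ) × (Fin n → ℂ)) : ℂ :=
  ∑ i : Fin n,
    (if (i : ℕ) < ν then p.1 i else 1) *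
      (fderiv ℂ f p (0, Pi.single i 1) * fderiv ℂ g p (Pi.single i 1, 0) -
        fderiv ℂ f p (Pi.single i 1, 0) * fderiv ℂ g p (0, Pi.single i 1))


lemma tangent_fderiv_zero {n μ : ℕ} {U : Set ((Fin n → ℂ) × (Fin n → ℂ))}
    (hU : IsOpen U) (f : ((Fin n → ℂ) × (Fin n → ℂ)) → ℂ)
    (hf : DifferentiableOn ℂ f U)
    (h0 : ∀ p ∈ U, (∀ i : Fin n, (i : ℕ) < μ → p.1 i = 0 ∧ p.2 i = 0) → f p = 0)
    (p : (Fin n → ℂ) × (Fin n → ℂ)) (hp : p ∈ U)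
    (hpW : ∀ i : Fin n, (i : ℕ) < μ → p.1 i = 0 ∧ p.2 i = 0)
    (v : (Fin n → ℂ) × (Fin n → ℂ))
    (hvW : ∀ i : Fin n, (i : ℕ) < μ → v.1 i = 0 ∧ v.2 i = 0) :
    fderiv ℂ f p v = 0 := by
  set g : ℂ → (Fin n → ℂ) × (Fin n → ℂ) := fun t => p + t • v with hg
  have hg0 : g 0 = p := by simp [hg]
  have hgW : ∀ t, ∀ i : Fin n, (i : ℕ) < μ → (g t).1 i = 0 ∧ (g t).2 i = 0 := by
    intro t i hi
    obtain ⟨h1, h2⟩ := hpW i hi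
    obtain ⟨h3, h4⟩ := hvW i hi
    simp [hg, h1, h2, h3, h4]
  have hgc : Continuous g := by
    apply continuous_const.add
    exact continuous_id.smul continuous_const
  have hdg : HasDerivAt g v 0 := by
    have : HasDerivAt (fun t : ℂ => t • v) ((1 : ℂ) • v) 0 :=
      (hasDerivAt_id (0 : ℂ)).smul_const v
    simpa [hg] using this.const_add p
  have hdf : DifferentiableAt ℂ f p := hf.differentiableAt (hU.mem_nhds hp)
  have hcomp : HasDerivAt (f ∘ g) (fderiv ℂ f p v) 0 := by
    have h := hdf.hasFDerivAt
    rw [← hg0]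
    rw [← hg0] at h
    exact h.comp_hasDerivAt 0 hdg
  have hev : (f ∘ g) =ᶠ[nhds (0 : ℂ)] fun _ => (0 : ℂ) := by
    have hmem : ∀ᶠ t in nhds (0 : ℂ), g t ∈ U := by
      have : g 0 ∈ U := by rw [hg0]; exact hp
      exact hgc.continuousAt.preimage_mem_nhds (hU.mem_nhds this)
    filter_upwards [hmem] with t ht
    exact h0 (g t) ht (hgW t)
  have hzero : HasDerivAt (f ∘ g) 0 0 :=
    (hasDerivAt_const (0 : ℂ) (0 : ℂ)).congr_of_eventuallyEq hev
  exact hcomp.unique hzero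

/-- Coordinate content of Proposition 2.4: the residual submanifold
`W = {x₁ = ⋯ = x_μ = ξ₁ = ⋯ = ξ_μ = 0}` is invariant-like for the logarithmic
Poisson bracket: if `f` vanishes on `W` then `{f,g}` vanishes on `W` for every
holomorphic `g`; in particular `W` is involutive. -/
theorem residual_involutive (n ν μ : ℕ) (hn : 1 ≤ n) (hν : ν ≤ n) (hμ : μ ≤ ν)
    (U : Set ((Fin n → ℂ) × (Fin n → ℂ))) (hU : IsOpen U) :
    (∀ f : ((Fin n → ℂ) × (Fin n → ℂ)) → ℂ, DifferentiableOn ℂ f U →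
      (∀ p ∈ U, (∀ i : Fin n, (i : ℕ) < μ → p.1 i = 0 ∧ p.2 i = 0) → f p = 0) →
      ∀ g : ((Fin n → ℂ) × (Fin n → ℂ)) → ℂ, DifferentiableOn ℂ g U →
      ∀ p ∈ U, (∀ i : Fin n, (i : ℕ) < μ → p.1 i = 0 ∧ p.2 i = 0) →
        logPoisson n ν f g p = 0) ∧
    (∀ f g : ((Fin n → ℂ) × (Fin n → ℂ)) → ℂ,
      DifferentiableOn ℂ f U → DifferentiableOn ℂ g U →
      (∀ p ∈ U, (∀ i : Fin n, (i : ℕ) < μ → p.1 i = 0 ∧ p.2 i = 0) → f p = 0) →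
      (∀ p ∈ U, (∀ i : Fin n, (i : ℕ) < μ → p.1 i = 0 ∧ p.2 i = 0) → g p = 0) →
      ∀ p ∈ U, (∀ i : Fin n, (i : ℕ) < μ → p.1 i = 0 ∧ p.2 i = 0) →
        logPoisson n ν f g p = 0) := by
  have main : ∀ f : ((Fin n → ℂ) × (Fin n → ℂ)) → ℂ, DifferentiableOn ℂ f U →
      (∀ p ∈ U, (∀ i : Fin n, (i : ℕ) < μ → p.1 i = 0 ∧ p.2 i = 0) → f p = 0) →
      ∀ g : ((Fin n → ℂ) × (Fin n → ℂ)) → ℂ, DifferentiableOn ℂ g U →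
      ∀ p ∈ U, (∀ i : Fin n, (i : ℕ) < μ → p.1 i = 0 ∧ p.2 i = 0) →
        logPoisson n ν f g p = 0 := by
    intro f hf h0 g hg p hp hpW
    unfold logPoisson
    apply Finset.sum_eq_zero
    intro i _
    by_cases hi : (i : ℕ) < μ
    · have : p.1 i = 0 := (hpW i hi).1
      rw [if_pos (lt_of_lt_of_le hi hμ), this, zero_mul]
    · have hx : fderiv ℂ f p (Pi.single i 1, 0) = 0 := by
        apply tangent_fderiv_zero hU f hf h0 p hp hpW
        intro j hj
        have : j ≠ i := by
          intro h; exact hi (h ▸ hj)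
        simp [Pi.single_eq_of_ne this]
      have hξ : fderiv ℂ f p (0, Pi.single i 1) = 0 := by
        apply tangent_fderiv_zero hU f hf h0 p hp hpW
        intro j hj
        have : j ≠ i := by
          intro h; exact hi (h ▸ hj)
        simp [Pi.single_eq_of_ne this]
      rw [hx, hξ]
      ring
  exact ⟨main, fun f g hf hg h0 _ p hp hpW => main f hf h0 g hg p hp hpW⟩
end

section
/- Fix integers n ≥ 1 and 1 ≤ ν ≤ n, a subset C ⊆ {1,…,n} with at least two elements, and j ∈ C with j ≤ ν. Define β : ℂⁿ → ℂⁿ by β(x)_i = x_j·x_i if i ∈ C and i ≠ j, and β(x)_i = x_i otherwise. For (x,ξ) ∈ ℂⁿ×ℂⁿ define ζ(x,ξ) ∈ ℂⁿ by: ζ_j(x,ξ) = Σ_{i∈C, i≤ν} ξ_i + x_j·Σ_{i∈C, i>ν} x_i·ξ_i; ζ_i(x,ξ) = x_j·ξ_i if i ∈ C and i > ν; and ζ_i(x,ξ) = ξ_i otherwise. Then for every x ∈ ℂⁿ with x_i ≠ 0 for all 1 ≤ i ≤ ν, every ξ ∈ ℂⁿ and every v ∈ ℂⁿ, one has Σ_{i=1}^{ν}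 ξ_i·(Dβ(x)v)_i/β(x)_i + Σ_{i=ν+1}^{n} ξ_i·(Dβ(x)v)_i = Σ_{i=1}^{ν} ζ_i(x,ξ)·v_i/x_i + Σ_{i=ν+1}^{n} ζ_i(x,ξ)·v_i, where Dβ(x) : ℂⁿ → ℂⁿ is the derivative of β at x. -/
/-!
For `i ∈ C \ {j}` the `i`-th component of `Dβ(x)v` is `x_j vᵢ + xᵢ v_j`. In a logarithmic
coordinate, division by `β(x)ᵢ = x_j xᵢ` splits it as `vᵢ/xᵢ + v_j/x_j`; in an ordinary one it
is `x_j vᵢ + (x_j xᵢ)·v_j/x_j`. So every summand of the pullback is the corresponding summand of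
the `ζ`-form plus a multiple of `v_j/x_j`, and these multiples, together with `ξ_j`, add up to `ζ_j`.
-/

open Finset

/-- The blow-up chart map `β` along the coordinate subspace `L = {xᵢ = 0 : i ∈ C}`,
in the affine chart associated with the generator `x_j` of the ideal of `L`:
`β(x)ᵢ = x_j·xᵢ` for `i ∈ C`, `i ≠ j`, and `β(x)ᵢ = xᵢ` otherwise. -/
noncomputable def blowUpChart (n : ℕ) (C : Finset (Fin n)) (j : Fin n) :
    (Fin n → ℂ) → (Fin n → ℂ) :=
  fun x i => if i ∈ C ∧ i ≠ j then x j * x i else x i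

/-- The new fiber coordinates `ζ` after the blow up:
`ζ_j = ∑_{i∈C, i≤ν} ξᵢ + x_j·∑_{i∈C, i>ν} xᵢ·ξᵢ`, `ζᵢ = x_j·ξᵢ` for `i ∈ C`, `i > ν`,
and `ζᵢ = ξᵢ` otherwise. -/
noncomputable def blowUpFiber (n ν : ℕ) (C : Finset (Fin n)) (j : Fin n)
    (x ξ : Fin n → ℂ) : Fin n → ℂ :=
  fun i =>
    if i = j then
      (∑ i' ∈ C.filter (fun i' : Fin n => (i' : ℕ) < ν), ξ i') +
        x j * ∑ i' ∈ C.filter (fun i' : Fin n => ν ≤ (i' : ℕ)), x i' * ξ i'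
    else if i ∈ C ∧ ν ≤ (i : ℕ) then x j * ξ i
    else ξ i

theorem hasFDerivAt_blowUpChart (n : ℕ) (C : Finset (Fin n)) (j : Fin n) (x : Fin n → ℂ) :
    HasFDerivAt (blowUpChart n C j)
      (ContinuousLinearMap.pi fun i : Fin n =>
        if i ∈ C ∧ i ≠ j then
          x j • (ContinuousLinearMap.proj i : (Fin n → ℂ) →L[ℂ] ℂ)
            + x i • (ContinuousLinearMap.proj j : (Fin n → ℂ) →L[ℂ] ℂ)
        else ContinuousLinearMap.proj i) x := by
  refine hasFDerivAt_pi'.mpr fun i => ?_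
  by_cases h : i ∈ C ∧ i ≠ j
  · simp only [blowUpChart, ContinuousLinearMap.proj_pi, if_pos h]
    exact (hasFDerivAt_apply j x).mul (hasFDerivAt_apply i x)
  · simp only [blowUpChart, ContinuousLinearMap.proj_pi, if_neg h]
    exact hasFDerivAt_apply i x

theorem fderiv_blowUpChart_apply (n : ℕ) (C : Finset (Fin n)) (j : Fin n) (x v : Fin n → ℂ)
    (i : Fin n) :
    fderiv ℂ (blowUpChart n C j) x v i =
      if i ∈ C ∧ i ≠ j then v j * x i + x j * v i else v i := by
  rw [(hasFDerivAt_blowUpChart n C j x).fderiv, ContinuousLinearMap.pi_apply]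
  split_ifs
  · simp only [add_apply, smul_apply, ContinuousLinearMap.proj_apply, smul_eq_mul]
    ring
  · rfl

theorem blowUpFiber_self (n ν : ℕ) (C : Finset (Fin n)) (j : Fin n) (x ξ : Fin n → ℂ) :
    blowUpFiber n ν C j x ξ j =
      ∑ i ∈ C, if (i : ℕ) < ν then ξ i else x j * x i * ξ i := by
  simp only [blowUpFiber, if_pos, Finset.sum_ite, not_lt, Finset.mul_sum, mul_assoc]

theorem pullback_summand_eq (n ν : ℕ) (C : Finset (Fin n)) (j : Fin n) (hjC : j ∈ C)
    (hjν : (j : ℕ) < ν) (x : Fin n → ℂ) (hx : ∀ i : Fin n, (i : ℕ) < ν → x i ≠ 0)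
    (ξ v : Fin n → ℂ) (i : Fin n) :
    ξ i * fderiv ℂ (blowUpChart n C j) x v i /
        (if (i : ℕ) < ν then blowUpChart n C j x i else 1)
      = (if i = j then 0
          else blowUpFiber n ν C j x ξ i * v i / (if (i : ℕ) < ν then x i else 1))
        + if i ∈ C then (if (i : ℕ) < ν then ξ i else x j * x i * ξ i) * (v j / x j) else 0 := by
  have hxj := hx j hjν
  rw [fderiv_blowUpChart_apply]
  by_cases hij : i = j
  · subst hij
    simp [blowUpChart, hjC, hjν, mul_div_assoc]
  by_cases hiC : i ∈ C
  · by_cases hiν : (i : ℕ) < ν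
    · have hxi := hx i hiν
      simp only [blowUpChart, blowUpFiber, hij, hiC, hiν, not_le.mpr hiν, ne_eq,
        not_false_eq_true, and_self, and_false, ↓reduceIte]
      field_simp
      ring
    · simp only [blowUpFiber, hij, hiC, hiν, le_of_not_gt hiν, ne_eq, not_false_eq_true,
        and_self, ↓reduceIte, div_one]
      field_simp
      ring
  · simp [blowUpChart, blowUpFiber, hij, hiC]

theorem pullback_canonical_one_form_general (n ν : ℕ)
    (C : Finset (Fin n)) (j : Fin n) (hjC : j ∈ C) (hjν : (j : ℕ) < ν)
    (x : Fin n → ℂ) (hx : ∀ i : Fin n, (i : ℕ) < ν → x i ≠ 0) (ξ v : Fin n → ℂ) :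
    ∑ i : Fin n,
        ξ i * fderiv ℂ (blowUpChart n C j) x v i /
          (if (i : ℕ) < ν then blowUpChart n C j x i else 1)
      = ∑ i : Fin n,
          blowUpFiber n ν C j x ξ i * v i / (if (i : ℕ) < ν then x i else 1) := by
  simp only [pullback_summand_eq n ν C j hjC hjν x hx, Finset.sum_add_distrib, Finset.sum_ite_mem,
    Finset.univ_inter, ← Finset.sum_mul, ← blowUpFiber_self]
  rw [Finset.sum_ite, Finset.sum_const_zero, zero_add, Finset.filter_ne',
    ← Finset.sum_erase_add _ _ (Finset.mem_univ j), if_pos hjν, mul_div_assoc]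

/-- The pullback under the blow-up chart map of the canonical logarithmic 1-form
`θ = ∑_{i≤ν} ξᵢ dxᵢ/xᵢ + ∑_{i>ν} ξᵢ dxᵢ` is again of canonical logarithmic form in the
new fiber coordinates `ζ`: for every tangent vector `v`,
`∑_i ξᵢ (Dβ(x)v)ᵢ/β(x)ᵢ = ∑_i ζᵢ vᵢ/xᵢ` (no denominator for `i > ν`). -/
theorem pullback_canonical_one_form (n ν : ℕ) (hn : 1 ≤ n) (hν₁ : 1 ≤ ν) (hν : ν ≤ n)
    (C : Finset (Fin n)) (hC : 2 ≤ C.card) (j : Fin n) (hjC : j ∈ C) (hjν : (j : ℕ) < ν)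
    (x : Fin n → ℂ) (hx : ∀ i : Fin n, (i : ℕ) < ν → x i ≠ 0) (ξ v : Fin n → ℂ) :
    ∑ i : Fin n,
        ξ i * fderiv ℂ (blowUpChart n C j) x v i /
          (if (i : ℕ) < ν then blowUpChart n C j x i else 1)
      = ∑ i : Fin n,
          blowUpFiber n ν C j x ξ i * v i / (if (i : ℕ) < ν then x i else 1) :=
  pullback_canonical_one_form_general n ν C j hjC hjν x hx ξ v
end
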